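/- Let A₁ be an n×n signed bipartite adjacency matrix with parts of sizes s and n−s, and let A₂ be an m×m signed adjacency matrix. Let λ, μ ≥ 0 be real numbers such that A₁² − λ²·I_n and A₂² − μ²·I_m are positive semidefinite (i.e. λ² and μ² are lower bounds for the eigenvalues of A₁² and A₂², as when λ² and μ² are the minimum eigenvalues of A₁² and A₂²). Assume that n = 2s, or that the characteristic polynomial of A₂ equals the characteristic polynomial of −A₂. Let 𝒜' = (A₁ + D)⊗A₂ be the signed semi-strong product matrix. Then for every subset S of the mn row indices of 𝒜' with |S| = ⌊mn/2⌋ + 1, there exists u ∈ S such that #{v ∈ S : 𝒜'_{uv} ≠ 0} ≥ √((λ² + 1)·μ²). -/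

import Mathlib

open Matrix Kronecker Finset

/-!
Put `C = A₁ + D = [[1, P], [Pᵀ, -1]]`. Since `A₁` anticommutes with `D`, `C² = A₁² + 1`, so every
eigenvalue `c` of `C` has `c² ≥ λ² + 1`, every eigenvalue `a` of `A₂` has `a² ≥ μ²`, and the
eigenvalues of `𝒜' = C ⊗ A₂` are the products `c a`. The quadratic form of `C` is positive definite
on vectors supported on the first block and negative definite on the second, so `C` has exactly `s`
positive and `n - s` negative eigenvalues. Hence, if `n = 2s` or the spectrum of `A₂` is symmetric,
at least half of the products `c a` are positive, and each of those is `≥ θ = √((λ² + 1) μ²)`.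

Huang's argument then applies: a set `S` of more than half of the vertices supports a nonzero
vector `x` orthogonal to all eigenvectors of `𝒜'` with eigenvalue `< θ`, and
`θ ‖x‖² ≤ xᵀ 𝒜' x ≤ Δ ‖x‖²`, where `Δ` is the maximum degree of the subgraph induced on `S`,
because the entries of `𝒜'` lie in `[-1, 1]`.
-/

theorem card_pos_add_card_neg {ι : Type*} [Fintype ι] {c : ι → ℝ} (hc : ∀ i, c i ≠ 0) :
    #{i | 0 < c i} + #{i | c i < 0} = Fintype.card ι := by
  rw [← card_univ, ← card_filter_add_card_filter_not (s := univ) (fun i => 0 < c i)]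
  congr 2
  ext i
  simp [(hc i).le_iff_lt]

theorem Nat.mul_le_mul_div_two_add {a b c d : ℕ} (h : a = b ∨ c = d) :
    (a + b) * (c + d) ≤ (a + b) * (c + d) / 2 + (a * c + b * d) := by
  rcases h with rfl | rfl
  · rw [show (a + a) * (c + d) = 2 * (a * c + a * d) by ring, Nat.mul_div_cancel_left _ two_pos]
    omega
  · rw [show (a + b) * (c + c) = 2 * (a * c + b * c) by ring, Nat.mul_div_cancel_left _ two_pos]
    omega

theorem card_le_card_div_two_add_card_sqrt_mul_le {ι κ : Type*} [Fintype ι] [Fintype κ]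
    {c : ι → ℝ} {a : κ → ℝ} {α β : ℝ} (hα : 0 < α) (hβ : 0 < β) (hc : ∀ i, α ≤ c i ^ 2)
    (ha : ∀ j, β ≤ a j ^ 2)
    (hsymm : #{i | 0 < c i} = #{i | c i < 0} ∨ #{j | 0 < a j} = #{j | a j < 0}) :
    Fintype.card (ι × κ) ≤ Fintype.card (ι × κ) / 2 + #{p : ι × κ | √(α * β) ≤ c p.1 * a p.2} := by
  classical
  have hc0 : ∀ i, c i ≠ 0 := fun i h => by nlinarith [hc i]
  have ha0 : ∀ j, a j ≠ 0 := fun j h => by nlinarith [ha j]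
  have hθ : ∀ i j, √(α * β) ≤ |c i * a j| := fun i j => Real.sqrt_le_iff.mpr ⟨abs_nonneg _, by
    rw [sq_abs, mul_pow]; exact mul_le_mul (hc i) (ha j) hβ.le (sq_nonneg _)⟩
  let Pc : Finset ι := {i | 0 < c i}
  let Nc : Finset ι := {i | c i < 0}
  let Pa : Finset κ := {j | 0 < a j}
  let Na : Finset κ := {j | a j < 0}
  have hsub : Pc ×ˢ Pa ∪ Nc ×ˢ Na ⊆ ({p : ι × κ | √(α * β) ≤ c p.1 * a p.2} : Finset _) := by
    rintro ⟨i, j⟩ hp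
    refine mem_filter.mpr ⟨mem_univ _, (hθ i j).trans_eq ?_⟩
    simp only [Pc, Nc, Pa, Na, mem_union, mem_product, mem_filter, mem_univ, true_and] at hp
    rcases hp with ⟨hi, hj⟩ | ⟨hi, hj⟩
    · exact abs_of_pos (mul_pos hi hj)
    · exact abs_of_pos (mul_pos_of_neg_of_neg hi hj)
  have hdisj : Disjoint (Pc ×ˢ Pa) (Nc ×ˢ Na) :=
    disjoint_product.mpr (Or.inl (disjoint_filter.mpr fun _ _ hi => hi.not_gt))
  have hle : #Pc * #Pa + #Nc * #Na ≤ #{p : ι × κ | √(α * β) ≤ c p.1 * a p.2} := by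
    rw [← card_product, ← card_product, ← card_union_of_disjoint hdisj]
    exact card_le_card hsub
  rw [Fintype.card_prod, ← card_pos_add_card_neg hc0, ← card_pos_add_card_neg ha0]
  exact (Nat.mul_le_mul_div_two_add hsymm).trans (Nat.add_le_add_left hle _)

namespace Matrix

variable {ι κ ι' κ' : Type*}

theorem abs_fromBlocks_one_apply_le_one [DecidableEq ι] [DecidableEq κ] {P : Matrix ι κ ℝ}
    (hP : ∀ i j, |P i j| ≤ 1) (i j : ι ⊕ κ) : |fromBlocks 1 P Pᵀ (-1) i j| ≤ 1 := by
  rcases i with i | i <;> rcases j with j | j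
  · by_cases h : i = j <;> simp [h]
  · exact hP i j
  · exact hP j i
  · by_cases h : i = j <;> simp [h]

variable [Fintype ι] [Fintype κ]

theorem IsSymm.exists_orthogonal_diagonalization [DecidableEq ι] {B : Matrix ι ι ℝ}
    (hB : B.IsSymm) :
    ∃ (U : Matrix ι ι ℝ) (c : ι → ℝ), U * Uᵀ = 1 ∧ Uᵀ * U = 1 ∧ B = U * diagonal c * Uᵀ := by
  have hH : B.IsHermitian := by rwa [IsHermitian, conjTranspose_eq_transpose_of_trivial]
  have hstar : star (hH.eigenvectorUnitary : Matrix ι ι ℝ) =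
      (hH.eigenvectorUnitary : Matrix ι ι ℝ)ᵀ :=
    conjTranspose_eq_transpose_of_trivial _
  refine ⟨hH.eigenvectorUnitary, hH.eigenvalues, ?_, ?_, ?_⟩
  · simpa [hstar] using mem_unitaryGroup_iff.mp hH.eigenvectorUnitary.2
  · simpa [hstar] using mem_unitaryGroup_iff'.mp hH.eigenvectorUnitary.2
  · simpa [Unitary.conjStarAlgAut_apply, hstar] using hH.spectral_theorem

theorem dotProduct_mulVec_conj_diagonal [DecidableEq κ] (U : Matrix ι κ ℝ) (g : κ → ℝ)
    (x : ι → ℝ) : x ⬝ᵥ (U * diagonal g * Uᵀ) *ᵥ x = ∑ k, g k * (x ᵥ* U) k ^ 2 := by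
  rw [← mulVec_mulVec, ← mulVec_mulVec, dotProduct_mulVec, mulVec_transpose]
  simp only [dotProduct, mulVec_diagonal]
  exact sum_congr rfl fun k _ => by ring

theorem vecMul_dotProduct_vecMul_self [DecidableEq ι] {U : Matrix ι κ ℝ} (hU : U * Uᵀ = 1)
    (x : ι → ℝ) : (x ᵥ* U) ⬝ᵥ (x ᵥ* U) = x ⬝ᵥ x := by
  rw [← mulVec_transpose, dotProduct_mulVec, vecMul_transpose, mulVec_mulVec, hU, one_mulVec]

theorem exists_ne_zero_supported_vecMul_eq_zero [DecidableEq ι] (U : Matrix ι κ ℝ)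
    (S : Finset ι) (T : Finset κ) (hST : #T < #S) :
    ∃ x : ι → ℝ, x ≠ 0 ∧ (∀ i ∉ S, x i = 0) ∧ ∀ k ∈ T, (x ᵥ* U) k = 0 := by
  let L : (ι → ℝ) →ₗ[ℝ] ((Sᶜ : Finset ι) → ℝ) × (T → ℝ) :=
    (LinearMap.funLeft ℝ ℝ Subtype.val).prod (LinearMap.funLeft ℝ ℝ Subtype.val ∘ₗ U.vecMulLinear)
  have hker : LinearMap.ker L ≠ ⊥ := LinearMap.ker_ne_bot_of_finrank_lt <| by
    simp only [Module.finrank_prod, Module.finrank_fintype_fun_eq_card, Fintype.card_coe,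
      card_compl]
    have := S.card_le_univ
    omega
  obtain ⟨x, hxL, hx0⟩ := (Submodule.ne_bot_iff _).mp hker
  simp only [LinearMap.mem_ker, L, LinearMap.prod_apply, Function.prod, Prod.mk_eq_zero,
    funext_iff, LinearMap.funLeft_apply, LinearMap.comp_apply, Matrix.vecMulLinear_apply] at hxL
  exact ⟨x, hx0, fun i hi => hxL.1 ⟨i, mem_compl.mpr hi⟩, fun k hk => hxL.2 ⟨k, hk⟩⟩

theorem card_le_card_pos_of_dotProduct_mulVec_pos [DecidableEq ι] {B U : Matrix ι ι ℝ}
    {c : ι → ℝ} (hB : B = U * diagonal c * Uᵀ) (S : Finset ι)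
    (hS : ∀ x ≠ 0, (∀ i ∉ S, x i = 0) → 0 < x ⬝ᵥ B *ᵥ x) :
    #S ≤ #{k | 0 < c k} := by
  by_contra! hlt
  obtain ⟨x, hx0, hxS, hxU⟩ := exists_ne_zero_supported_vecMul_eq_zero U S _ hlt
  have hnonpos : x ⬝ᵥ B *ᵥ x ≤ 0 := by
    rw [hB, dotProduct_mulVec_conj_diagonal]
    refine sum_nonpos fun k _ => ?_
    by_cases hk : 0 < c k
    · simp [hxU k (mem_filter.mpr ⟨mem_univ k, hk⟩)]
    · exact mul_nonpos_of_nonpos_of_nonneg (not_lt.mp hk) (sq_nonneg _)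
  exact (hS x hx0 hxS).not_ge hnonpos

theorem dotProduct_mulVec_le_sum_degree {B : Matrix ι ι ℝ} (hB : B.IsSymm)
    (hB1 : ∀ u v, |B u v| ≤ 1) {S : Finset ι} {x : ι → ℝ} (hx : ∀ i ∉ S, x i = 0) :
    x ⬝ᵥ B *ᵥ x ≤ ∑ u ∈ S, (#{v ∈ S | B u v ≠ 0} : ℝ) * x u ^ 2 := by
  let f : ι → ι → ℝ := fun u v => if B u v ≠ 0 then x u ^ 2 / 2 else 0
  have hsupp : x ⬝ᵥ B *ᵥ x = ∑ u ∈ S, ∑ v ∈ S, x u * B u v * x v := by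
    simp only [dotProduct, mulVec, mul_sum, ← mul_assoc]
    rw [← sum_subset (subset_univ S) fun u _ hu => by simp [hx u hu]]
    exact sum_congr rfl fun u _ => (sum_subset (subset_univ S) fun v _ hv => by simp [hx v hv]).symm
  have hterm : ∀ u v, x u * B u v * x v ≤ f u v + f v u := by
    intro u v
    by_cases h0 : B u v = 0
    · simp [f, h0, hB.apply u v]
    · have h0' : B v u ≠ 0 := by rwa [hB.apply u v]
      simp only [f, if_pos h0, if_pos h0', ne_eq]
      have : x u * B u v * x v ≤ |x u| * |x v| := by
        calc x u * B u v * x v ≤ |B u v| * (|x u| * |x v|) := by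
              rw [← abs_mul, ← abs_mul]; exact (le_abs_self _).trans_eq (by ring_nf)
          _ ≤ |x u| * |x v| := mul_le_of_le_one_left (by positivity) (hB1 u v)
      nlinarith [sq_nonneg (|x u| - |x v|), sq_abs (x u), sq_abs (x v)]
  calc x ⬝ᵥ B *ᵥ x ≤ ∑ u ∈ S, ∑ v ∈ S, (f u v + f v u) := by
        rw [hsupp]; exact sum_le_sum fun u _ => sum_le_sum fun v _ => hterm u v
    _ = 2 * ∑ u ∈ S, ∑ v ∈ S, f u v := by
        simp only [sum_add_distrib]
        rw [sum_comm (s := S) (t := S) (f := fun u v => f v u)]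
        ring
    _ = ∑ u ∈ S, (#{v ∈ S | B u v ≠ 0} : ℝ) * x u ^ 2 := by
        rw [mul_sum]
        refine sum_congr rfl fun u _ => ?_
        rw [← sum_filter, sum_const, nsmul_eq_mul]
        ring

theorem exists_mem_le_card_filter_ne_zero [DecidableEq ι] {B U : Matrix ι ι ℝ} {g : ι → ℝ}
    (hU : U * Uᵀ = 1) (hB : B = U * diagonal g * Uᵀ) (hB1 : ∀ u v, |B u v| ≤ 1)
    {θ : ℝ} {S : Finset ι} (hS : Fintype.card ι < #S + #{k | θ ≤ g k}) :
    ∃ u ∈ S, θ ≤ #{v ∈ S | B u v ≠ 0} := by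
  have hcard : #{k | g k < θ} < #S := by
    have := card_filter_add_card_filter_not (s := univ) (fun k => θ ≤ g k)
    simp only [not_le, card_univ] at this
    omega
  obtain ⟨x, hx0, hxS, hxU⟩ := exists_ne_zero_supported_vecMul_eq_zero U S _ hcard
  have hsymm : B.IsSymm := by simp [hB, IsSymm, transpose_mul, Matrix.mul_assoc]
  have hxx : 0 < x ⬝ᵥ x := by simpa using dotProduct_self_star_pos_iff.mpr hx0
  have hxS' : x ⬝ᵥ x = ∑ v ∈ S, x v ^ 2 := by
    rw [dotProduct, ← sum_subset (subset_univ S) fun v _ hv => by simp [hxS v hv]]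
    simp only [sq]
  have hlow : θ * (x ⬝ᵥ x) ≤ x ⬝ᵥ B *ᵥ x := by
    rw [hB, dotProduct_mulVec_conj_diagonal, ← vecMul_dotProduct_vecMul_self hU, dotProduct,
      mul_sum]
    refine sum_le_sum fun k _ => ?_
    by_cases hk : g k < θ
    · simp [hxU k (by simpa using hk)]
    · rw [← sq]
      exact mul_le_mul_of_nonneg_right (not_lt.mp hk) (sq_nonneg _)
  obtain ⟨u, hu, hmax⟩ := S.exists_max_image (fun u => #{v ∈ S | B u v ≠ 0})
    (card_pos.mp (by omega))
  refine ⟨u, hu, le_of_mul_le_mul_right ?_ hxx⟩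
  calc θ * (x ⬝ᵥ x) ≤ x ⬝ᵥ B *ᵥ x := hlow
    _ ≤ ∑ v ∈ S, (#{w ∈ S | B v w ≠ 0} : ℝ) * x v ^ 2 :=
        dotProduct_mulVec_le_sum_degree hsymm hB1 hxS
    _ ≤ ∑ v ∈ S, (#{w ∈ S | B u w ≠ 0} : ℝ) * x v ^ 2 := by
        gcongr ∑ v ∈ S, ?_ * _ with v hv
        exact_mod_cast hmax v hv
    _ = #{w ∈ S | B u w ≠ 0} * (x ⬝ᵥ x) := by rw [hxS', mul_sum]

open Polynomial in
theorem charpoly_conj_diagonal {R : Type*} [CommRing R] [DecidableEq ι] {U : Matrix ι ι R}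
    (hU : Uᵀ * U = 1) (c : ι → R) : (U * diagonal c * Uᵀ).charpoly = ∏ i, (X - C (c i)) := by
  rw [Matrix.mul_assoc, charpoly_mul_comm, Matrix.mul_assoc, hU, Matrix.mul_one,
    charpoly_diagonal]

theorem card_pos_eq_card_neg_of_charpoly_eq_charpoly_neg [DecidableEq ι] {B U : Matrix ι ι ℝ}
    {c : ι → ℝ} (hU : Uᵀ * U = 1) (hB : B = U * diagonal c * Uᵀ)
    (h : B.charpoly = (-B).charpoly) : #{i | 0 < c i} = #{i | c i < 0} := by
  have hneg : -B = U * diagonal (-c) * Uᵀ := by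
    rw [hB, show diagonal (-c) = -diagonal c from (diagonal_neg c).symm, Matrix.mul_neg,
      Matrix.neg_mul]
  have hroots : ∀ d : ι → ℝ, (U * diagonal d * Uᵀ).charpoly.roots = univ.val.map d := by
    intro d
    rw [charpoly_conj_diagonal hU, Polynomial.roots_prod]
    · simp
    · simp [prod_ne_zero_iff, Polynomial.X_sub_C_ne_zero]
  have := congrArg (Multiset.countP (0 < ·)) (congrArg Polynomial.roots h)
  rw [hneg, hB, hroots, hroots, Multiset.countP_map, Multiset.countP_map] at this
  simpa [neg_pos, card_def] using this

theorem le_sq_of_posSemidef_mul_self_sub_smul [DecidableEq ι] {B U : Matrix ι ι ℝ}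
    {c : ι → ℝ} (hU : Uᵀ * U = 1) (hB : B = U * diagonal c * Uᵀ) {α : ℝ}
    (h : (B * B - α • 1).PosSemidef) (i : ι) : α ≤ c i ^ 2 := by
  have hcancel : ∀ X : Matrix ι ι ℝ, Uᵀ * (U * X) = X := fun X => by
    rw [← Matrix.mul_assoc, hU, Matrix.one_mul]
  have hconj : Uᵀ * (B * B - α • 1) * U = diagonal fun i => c i ^ 2 - α := by
    have hsq : Uᵀ * (B * B) * U = diagonal c * diagonal c := by
      simp [hB, Matrix.mul_assoc, hcancel, hU]
    rw [Matrix.mul_sub, Matrix.sub_mul, hsq, Matrix.mul_smul, Matrix.mul_one, Matrix.smul_mul, hU,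
      diagonal_mul_diagonal, smul_one_eq_diagonal, diagonal_sub]
    simp only [sq]
  have := h.conjTranspose_mul_mul_same U
  rw [conjTranspose_eq_transpose_of_trivial, hconj, posSemidef_diagonal_iff] at this
  linarith [this i]

theorem card_pos_eq_and_card_neg_eq_of_fromBlocks_one [DecidableEq ι] [DecidableEq κ]
    {P : Matrix ι κ ℝ} {U : Matrix (ι ⊕ κ) (ι ⊕ κ) ℝ} {c : ι ⊕ κ → ℝ}
    (h : fromBlocks 1 P Pᵀ (-1) = U * diagonal c * Uᵀ) (hc : ∀ i, c i ≠ 0) :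
    #{i | 0 < c i} = Fintype.card ι ∧ #{i | c i < 0} = Fintype.card κ := by
  have hpos : Fintype.card ι ≤ #{i | 0 < c i} := by
    have := card_le_card_pos_of_dotProduct_mulVec_pos h (univ.map .inl) fun x hx0 hxS => ?_
    · simpa using this
    have hx : x = Sum.elim (x ∘ Sum.inl) 0 := by
      funext i; rcases i with i | j
      · rfl
      · exact hxS _ (by simp)
    have hy : x ∘ Sum.inl ≠ 0 := fun hy => hx0 (by rw [hx, hy, Sum.elim_zero_zero])
    rw [hx]
    simpa [fromBlocks_mulVec] using dotProduct_self_star_pos_iff.mpr hy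
  have hneg : Fintype.card κ ≤ #{i | c i < 0} := by
    have h' : fromBlocks (-1) (-P) (-P)ᵀ 1 = U * diagonal (-c) * Uᵀ := by
      rw [show diagonal (-c) = -diagonal c from (diagonal_neg c).symm, Matrix.mul_neg,
        Matrix.neg_mul, ← h, fromBlocks_neg, transpose_neg, neg_neg]
    have := card_le_card_pos_of_dotProduct_mulVec_pos h' (univ.map .inr) fun x hx0 hxS => ?_
    · simpa using this
    have hx : x = Sum.elim (0 : ι → ℝ) (x ∘ Sum.inr) := by
      funext i; rcases i with i | j
      · exact hxS _ (by simp)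
      · rfl
    have hy : x ∘ Sum.inr ≠ 0 := fun hy => hx0 (by rw [hx, hy, Sum.elim_zero_zero])
    rw [hx]
    simpa [fromBlocks_mulVec] using dotProduct_self_star_pos_iff.mpr hy
  have := card_pos_add_card_neg hc
  rw [Fintype.card_sum] at this
  omega

theorem fromBlocks_one_mul_self (P : Matrix ι κ ℝ) [DecidableEq ι] [DecidableEq κ] :
    fromBlocks 1 P Pᵀ (-1) * fromBlocks 1 P Pᵀ (-1) =
      fromBlocks 0 P Pᵀ 0 * fromBlocks 0 P Pᵀ 0 + 1 := by
  simp [fromBlocks_multiply, ← fromBlocks_one, fromBlocks_add, add_comm]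

theorem exists_orthogonal_diagonalization_fromBlocks_one [DecidableEq ι] [DecidableEq κ]
    (P : Matrix ι κ ℝ) {lam : ℝ}
    (hpsd : (fromBlocks 0 P Pᵀ 0 * fromBlocks 0 P Pᵀ 0 - lam ^ 2 • 1).PosSemidef) :
    ∃ (U : Matrix (ι ⊕ κ) (ι ⊕ κ) ℝ) (c : ι ⊕ κ → ℝ), U * Uᵀ = 1 ∧
      fromBlocks 1 P Pᵀ (-1) = U * diagonal c * Uᵀ ∧ (∀ i, lam ^ 2 + 1 ≤ c i ^ 2) ∧
      #{i | 0 < c i} = Fintype.card ι ∧ #{i | c i < 0} = Fintype.card κ := by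
  obtain ⟨U, c, hU₁, hU₂, hUc⟩ :=
    (isSymm_one.fromBlocks (B := P) rfl isSymm_one.neg).exists_orthogonal_diagonalization
  have hc : ∀ i, lam ^ 2 + 1 ≤ c i ^ 2 := le_sq_of_posSemidef_mul_self_sub_smul hU₂ hUc <| by
    rwa [fromBlocks_one_mul_self, add_smul, one_smul, add_sub_add_right_eq_sub]
  have hc0 : ∀ i, c i ≠ 0 := fun i h => by nlinarith [hc i, sq_nonneg lam]
  exact ⟨U, c, hU₁, hUc, hc, card_pos_eq_and_card_neg_eq_of_fromBlocks_one hUc hc0⟩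

theorem kronecker_conj_diagonal [DecidableEq ι] [DecidableEq κ] (U : Matrix ι' ι ℝ)
    (V : Matrix κ' κ ℝ) (c : ι → ℝ) (a : κ → ℝ) :
    (U * diagonal c * Uᵀ) ⊗ₖ (V * diagonal a * Vᵀ) =
      U ⊗ₖ V * diagonal (fun p : ι × κ => c p.1 * a p.2) * (U ⊗ₖ V)ᵀ := by
  rw [mul_kronecker_mul, mul_kronecker_mul, diagonal_kronecker_diagonal, kroneckerMap_transpose]

theorem kronecker_mul_transpose_eq_one [DecidableEq ι'] [DecidableEq κ'] {U : Matrix ι' ι ℝ}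
    {V : Matrix κ' κ ℝ} (hU : U * Uᵀ = 1) (hV : V * Vᵀ = 1) :
    U ⊗ₖ V * (U ⊗ₖ V)ᵀ = 1 := by
  rw [← kroneckerMap_transpose, ← mul_kronecker_mul, hU, hV, one_kronecker_one]

end Matrix

theorem signed_semi_strong_product_induced_subgraph_max_degree_general_general
    (s t m : ℕ) (lam mu : ℝ)
    (P : Matrix (Fin s) (Fin t) ℝ)
    (hP : ∀ i j, P i j = -1 ∨ P i j = 0 ∨ P i j = 1)
    (A₂ : Matrix (Fin m) (Fin m) ℝ)
    (hA₂symm : A₂.IsSymm)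
    (hA₂ent : ∀ i j, A₂ i j = -1 ∨ A₂ i j = 0 ∨ A₂ i j = 1)
    (A₁ : Matrix (Fin s ⊕ Fin t) (Fin s ⊕ Fin t) ℝ)
    (hA₁ : A₁ = Matrix.fromBlocks 0 P Pᵀ 0)
    (hpsd₁ : (A₁ * A₁ - (lam ^ 2) • (1 : Matrix (Fin s ⊕ Fin t) (Fin s ⊕ Fin t) ℝ)).PosSemidef)
    (hpsd₂ : (A₂ * A₂ - (mu ^ 2) • (1 : Matrix (Fin m) (Fin m) ℝ)).PosSemidef)
    (hbal : s + t = 2 * s ∨ A₂.charpoly = (-A₂).charpoly)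
    (D : Matrix (Fin s ⊕ Fin t) (Fin s ⊕ Fin t) ℝ)
    (hD : D = Matrix.fromBlocks 1 0 0 (-1))
    (𝒜 : Matrix ((Fin s ⊕ Fin t) × Fin m) ((Fin s ⊕ Fin t) × Fin m) ℝ)
    (h𝒜 : 𝒜 = (A₁ + D) ⊗ₖ A₂)
    (S : Finset ((Fin s ⊕ Fin t) × Fin m))
    (hS : S.card = m * (s + t) / 2 + 1) :
    ∃ u ∈ S, Real.sqrt ((lam ^ 2 + 1) * mu ^ 2) ≤
      ((S.filter (fun v => 𝒜 u v ≠ 0)).card : ℝ) := by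
  rcases eq_or_ne mu 0 with rfl | hμ
  · obtain ⟨u, hu⟩ : S.Nonempty := card_pos.mp (by omega)
    exact ⟨u, hu, by simp⟩
  subst hA₁ hD h𝒜
  obtain ⟨U, c, hU, hUc, hc, hcpos, hcneg⟩ :=
    exists_orthogonal_diagonalization_fromBlocks_one P hpsd₁
  obtain ⟨V, a, hV₁, hV₂, hVa⟩ := hA₂symm.exists_orthogonal_diagonalization
  have hsymm : #{i | 0 < c i} = #{i | c i < 0} ∨ #{j | 0 < a j} = #{j | a j < 0} :=
    hbal.imp (fun h => by simp only [hcpos, hcneg, Fintype.card_fin]; omega)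
      (card_pos_eq_card_neg_of_charpoly_eq_charpoly_neg hV₂ hVa)
  have hcount := card_le_card_div_two_add_card_sqrt_mul_le (by positivity)
    (sq_pos_of_ne_zero hμ) hc (le_sq_of_posSemidef_mul_self_sub_smul hV₂ hVa hpsd₂) hsymm
  have hC : fromBlocks 0 P Pᵀ 0 + fromBlocks 1 0 0 (-1) = fromBlocks 1 P Pᵀ (-1) := by
    simp [fromBlocks_add]
  have habs : ∀ x : ℝ, x = -1 ∨ x = 0 ∨ x = 1 → |x| ≤ 1 := by
    rintro x (rfl | rfl | rfl) <;> norm_num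
  refine exists_mem_le_card_filter_ne_zero (g := fun p => c p.1 * a p.2)
    (kronecker_mul_transpose_eq_one hU hV₁) (by rw [hC, hUc, hVa, kronecker_conj_diagonal])
    (fun u v => ?_) ?_
  · rw [hC, kroneckerMap_apply, abs_mul]
    exact mul_le_one₀ (abs_fromBlocks_one_apply_le_one (fun i j => habs _ (hP i j)) _ _)
      (abs_nonneg _) (habs _ (hA₂ent _ _))
  · simp only [Fintype.card_prod, Fintype.card_sum, Fintype.card_fin] at hcount ⊢
    rw [hS, Nat.mul_comm m]
    omega

/-- Let `A₁` be an `n × n` signed bipartite adjacency matrix (parts of sizes `s` and `t = n - s`)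
and `A₂` an `m × m` signed adjacency matrix, with `λ² ≤` eigenvalues of `A₁²` and `μ² ≤`
eigenvalues of `A₂²` (stated as positive semidefiniteness).  If the bipartition is balanced
(`n = 2s`) or the spectrum of `A₂` is symmetric, then every `(⌊mn/2⌋ + 1)`-vertex induced
subgraph of the signed semi-strong product `𝒜' = (A₁ + D) ⊗ A₂` has maximum degree at least
`√((λ² + 1)·μ²)`. -/
theorem signed_semi_strong_product_induced_subgraph_max_degree_general
    (s t m : ℕ) (lam mu : ℝ) (hlam : 0 ≤ lam) (hmu : 0 ≤ mu)
    (P : Matrix (Fin s) (Fin t) ℝ)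
    (hP : ∀ i j, P i j = -1 ∨ P i j = 0 ∨ P i j = 1)
    (A₂ : Matrix (Fin m) (Fin m) ℝ)
    (hA₂symm : A₂.IsSymm) (hA₂diag : ∀ i, A₂ i i = 0)
    (hA₂ent : ∀ i j, A₂ i j = -1 ∨ A₂ i j = 0 ∨ A₂ i j = 1)
    (A₁ : Matrix (Fin s ⊕ Fin t) (Fin s ⊕ Fin t) ℝ)
    (hA₁ : A₁ = Matrix.fromBlocks 0 P Pᵀ 0)
    (hpsd₁ : (A₁ * A₁ - (lam ^ 2) • (1 : Matrix (Fin s ⊕ Fin t) (Fin s ⊕ Fin t) ℝ)).PosSemidef)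
    (hpsd₂ : (A₂ * A₂ - (mu ^ 2) • (1 : Matrix (Fin m) (Fin m) ℝ)).PosSemidef)
    (hbal : s + t = 2 * s ∨ A₂.charpoly = (-A₂).charpoly)
    (D : Matrix (Fin s ⊕ Fin t) (Fin s ⊕ Fin t) ℝ)
    (hD : D = Matrix.fromBlocks 1 0 0 (-1))
    (𝒜 : Matrix ((Fin s ⊕ Fin t) × Fin m) ((Fin s ⊕ Fin t) × Fin m) ℝ)
    (h𝒜 : 𝒜 = (A₁ + D) ⊗ₖ A₂)
    (S : Finset ((Fin s ⊕ Fin t) × Fin m))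
    (hS : S.card = m * (s + t) / 2 + 1) :
    ∃ u ∈ S, Real.sqrt ((lam ^ 2 + 1) * mu ^ 2) ≤
      ((S.filter (fun v => 𝒜 u v ≠ 0)).card : ℝ) :=
  signed_semi_strong_product_induced_subgraph_max_degree_general_general s t m lam mu P hP A₂
    hA₂symm hA₂ent A₁ hA₁ hpsd₁ hpsd₂ hbal D hD 𝒜 h𝒜 S hS
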